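/- Let K, S, C, B be real 3×3 matrices such that the block matrix A = [[K,S],[C,B]] is positive definite, let m_e, m_c ∈ ℝ and r ∈ ℝ³. Then there exist λ ∈ ℝ, a unit vector g ∈ ℝ³, and ξ ∈ ℝ³ solving the system K ξ + λ S g = m_e g and C ξ + λ B g = − m_c (r × g). -/

import Mathlib

/-!
Eliminating `ξ = K⁻¹ (m_e g - λ S g)` turns the second equation into the generalized eigenproblem
`λ (B - C K⁻¹ S) g = (-m_c [r]_× - m_e C K⁻¹) g`. Positive definiteness of the block matrix makes
`K` and its Schur complement `B - C K⁻¹ S` invertible, so this is an ordinary eigenproblem for a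
real `3 × 3` matrix, which has a real eigenvalue because its characteristic polynomial has odd
degree; a real eigenvector can be normalized.
-/

open Matrix Polynomial Filter

theorem Polynomial.tendsto_eval_atBot_of_odd_natDegree {P : ℝ[X]} (hP : Odd P.natDegree)
    (hlc : 0 < P.leadingCoeff) : Tendsto (fun x => P.eval x) atBot atBot := by
  have hpow : Tendsto (fun x : ℝ => P.leadingCoeff * x ^ P.natDegree) atBot atBot := by
    have h := (tendsto_pow_atTop (α := ℝ) hP.pos.ne').comp tendsto_neg_atBot_atTop
    refine Tendsto.const_mul_atBot hlc (tendsto_neg_atTop_atBot.comp h |>.congr fun x => ?_)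
    simp [hP.neg_pow]
  exact P.isEquivalent_atBot_lead.symm.tendsto_atBot hpow

theorem Polynomial.exists_isRoot_of_odd_natDegree_real {P : ℝ[X]} (hP : Odd P.natDegree) :
    ∃ x, P.IsRoot x := by
  wlog hlc : 0 < P.leadingCoeff generalizing P
  · have hP0 : P ≠ 0 := by rintro rfl; simp at hP
    have hneg : 0 < (-P).leadingCoeff := by
      rw [leadingCoeff_neg, neg_pos]
      exact (not_lt.mp hlc).lt_of_ne (leadingCoeff_ne_zero.mpr hP0)
    simpa using this (by rwa [natDegree_neg]) hneg
  have hdeg : 0 < P.degree := natDegree_pos_iff_degree_pos.mp hP.pos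
  exact P.continuous.surjective (P.tendsto_atTop_of_leadingCoeff_nonneg hdeg hlc.le)
    (P.tendsto_eval_atBot_of_odd_natDegree hP hlc) 0

theorem Matrix.exists_hasEigenvalue_toLin'_of_odd_card {n : Type*} [Fintype n] [DecidableEq n]
    (hn : Odd (Fintype.card n)) (F : Matrix n n ℝ) :
    ∃ t, Module.End.HasEigenvalue (toLin' F) t := by
  obtain ⟨t, ht⟩ := exists_isRoot_of_odd_natDegree_real (P := F.charpoly)
    (by rwa [charpoly_natDegree_eq_dim])
  exact ⟨t, (Module.End.hasEigenvalue_iff_isRoot_charpoly _ _).mpr (by rwa [charpoly_toLin'])⟩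

theorem exists_smul_dotProduct_smul_self_eq_one {n : Type*} [Fintype n] {v : n → ℝ}
    (hv : v ≠ 0) : ∃ c : ℝ, (c • v) ⬝ᵥ (c • v) = 1 := by
  have hpos : 0 < v ⬝ᵥ v := by simpa using dotProduct_self_star_pos_iff.mpr hv
  refine ⟨(√(v ⬝ᵥ v))⁻¹, ?_⟩
  rw [smul_dotProduct, dotProduct_smul, smul_eq_mul, smul_eq_mul, ← mul_assoc, ← mul_inv,
    Real.mul_self_sqrt hpos.le, inv_mul_cancel₀ hpos.ne']

theorem Matrix.exists_block_solution_of_schur_eq {𝕜 : Type*} [Field 𝕜] {n : Type*} [Fintype n]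
    [DecidableEq n] {K S C B T : Matrix n n 𝕜} (hK : IsUnit K.det) {c l : 𝕜} {g : n → 𝕜}
    (hg : l • (B - C * K⁻¹ * S) *ᵥ g = (T - c • (C * K⁻¹)) *ᵥ g) :
    ∃ ξ, K *ᵥ ξ + l • S *ᵥ g = c • g ∧ C *ᵥ ξ + l • B *ᵥ g = T *ᵥ g := by
  refine ⟨K⁻¹ *ᵥ (c • g - l • S *ᵥ g), ?_, ?_⟩
  · rw [mulVec_mulVec, mul_nonsing_inv _ hK, one_mulVec, sub_add_cancel]
  · simp only [sub_mulVec, smul_mulVec, mulVec_sub, mulVec_smul, mulVec_mulVec] at hg ⊢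
    rw [← mul_assoc]
    linear_combination (norm := module) hg

/-- Solvability of the algebraic system governing the steady free fall of a slender
rigid body at low Reynolds number. -/
theorem steady_free_fall_algebraic_system
    (K S C B : Matrix (Fin 3) (Fin 3) ℝ)
    (hA : (Matrix.fromBlocks K S C B).PosDef)
    (m_e m_c : ℝ) (r : Fin 3 → ℝ) :
    ∃ (l : ℝ) (g ξ : Fin 3 → ℝ), g ⬝ᵥ g = 1 ∧
      K.mulVec ξ + l • S.mulVec g = m_e • g ∧
      C.mulVec ξ + l • B.mulVec g = -(m_c • crossProduct r g) := by
  have hK : IsUnit K := (hA.submatrix Sum.inl_injective).isUnit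
  let := hK.invertible
  set D := B - C * K⁻¹ * S
  have hD : IsUnit D := by simpa using isUnit_fromBlocks_iff_of_invertible₁₁.mp hA.isUnit
  set N := -(m_c • LinearMap.toMatrix' (crossProduct r)) - m_e • (C * K⁻¹)
  obtain ⟨l, hl⟩ := exists_hasEigenvalue_toLin'_of_odd_card (by rw [Fintype.card_fin]; decide)
    (D⁻¹ * N)
  obtain ⟨v, hv⟩ := hl.exists_hasEigenvector
  obtain ⟨c, hc⟩ := exists_smul_dotProduct_smul_self_eq_one hv.2
  have hDN : l • D *ᵥ (c • v) = N *ᵥ (c • v) := by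
    have hFv : (D⁻¹ * N) *ᵥ (c • v) = l • (c • v) := by
      rw [mulVec_smul, ← toLin'_apply, hv.apply_eq_smul, smul_comm]
    rw [← mulVec_smul, ← hFv, mulVec_mulVec, ← mul_assoc,
      mul_nonsing_inv _ ((isUnit_iff_isUnit_det D).mp hD), one_mul]
  obtain ⟨ξ, hξ₁, hξ₂⟩ := exists_block_solution_of_schur_eq ((isUnit_iff_isUnit_det K).mp hK) hDN
  exact ⟨l, c • v, ξ, hc, hξ₁, by rw [hξ₂, neg_mulVec, smul_mulVec, LinearMap.toMatrix'_mulVec]⟩
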